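/- arXiv:2505.06059 — 7 statements merged into one kernel-verified Lean document; each statement's English description precedes it below -/
import Mathlib

section
/- Let (𝒞, ⊗, I) be a symmetric monoidal closed category, (F, ∇^F, η^F) and (G, ∇^G, η^G) lax monoidal endofunctors of 𝒞, and μ : F ⟶ G a monoidal natural transformation. Suppose the pullback functor μ^* : Alg^G ⥤ Alg^F has a left adjoint μ_!. If an F-algebra A is C-initial for an F-coalgebra (C, χ), then the G-algebra μ_!(A) is μ_*(C)-initial, where μ_*(C) is the pushforward G-coalgebra (C, μ_C ∘ χ). -/
/-!
Currying identifies measurings `C ⊗ A ⟶ B` with `F`-algebra maps `A ⟶ [C, B]`, where the internal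
hom `[C, B]` carries the `F`-algebra structure induced by `χ`, `∇` and `β`. Since `μ` is monoidal,
`μ^* [μ_* C, B] = [C, μ^* B]`, so the adjunction `μ_! ⊣ μ^*` gives
`Alg^G (μ_! A, [μ_* C, B]) ≃ Alg^F (A, [C, μ^* B])`, and uniqueness of measurings transfers.
-/

open CategoryTheory Category MonoidalCategory Limits

universe v u

namespace PaperStmt

variable {C : Type u} [Category.{v} C] [MonoidalCategory.{v} C]

/-- The pullback of a `G`-algebra along a natural transformation `ν : F ⟶ G` sends
`(A, α)` to `(A, α ∘ ν_A)` and is the identity on morphisms. -/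
@[simps]
def pullbackAlg {F G : C ⥤ C} (ν : F ⟶ G) :
    Endofunctor.Algebra G ⥤ Endofunctor.Algebra F where
  obj B := ⟨B.a, ν.app B.a ≫ B.str⟩
  map {A B} g := { f := g.f, h := by simp }

/-- The pushforward of an `F`-coalgebra along `μ : F ⟶ G` sends `(C, χ)` to `(C, μ_C ∘ χ)`. -/
@[simps]
def pushforwardCoalg {F G : C ⥤ C} (μ : F ⟶ G) :
    Endofunctor.Coalgebra F ⥤ Endofunctor.Coalgebra G where
  obj V := ⟨V.V, V.str ≫ μ.app V.V⟩
  map {V W} g := { f := g.f, h := by dsimp; rw [Category.assoc, ← μ.naturality, g.h_assoc] }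

/-- `φ : C ⊗ A ⟶ B` is a measuring from the `F`-algebra `A` to the `F`-algebra `B` by the
`F`-coalgebra `Co`: `φ ∘ (id_C ⊗ α) = β ∘ F(φ) ∘ ∇_{C,A} ∘ (χ ⊗ id_{F A})`. -/
def IsMeasuring (F : C ⥤ C) [F.LaxMonoidal]
    (Co : Endofunctor.Coalgebra F) (A B : Endofunctor.Algebra F)
    (φ : Co.V ⊗ A.a ⟶ B.a) : Prop :=
  (Co.V ◁ A.str) ≫ φ =
    (Co.str ▷ F.obj A.a) ≫ Functor.LaxMonoidal.μ F Co.V A.a ≫ F.map φ ≫ B.str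

/-- The tensor product coalgebra of two `F`-coalgebras, with structure map
`∇_{D,C} ∘ (δ ⊗ χ)`. -/
def tensorCoalg (F : C ⥤ C) [F.LaxMonoidal] (D Co : Endofunctor.Coalgebra F) :
    Endofunctor.Coalgebra F :=
  ⟨D.V ⊗ Co.V, (D.str ⊗ₘ Co.str) ≫ Functor.LaxMonoidal.μ F D.V Co.V⟩

/-- The unit coalgebra `(I, η)`. -/
def unitCoalg (F : C ⥤ C) [F.LaxMonoidal] : Endofunctor.Coalgebra F :=
  ⟨𝟙_ C, Functor.LaxMonoidal.ε F⟩

/-- An `F`-algebra `A` is `C`-initial if for every `F`-algebra `B` there is a unique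
measuring `C ⊗ A ⟶ B`. -/
def IsCInitial (F : C ⥤ C) [F.LaxMonoidal]
    (Co : Endofunctor.Coalgebra F) (A : Endofunctor.Algebra F) : Prop :=
  ∀ B : Endofunctor.Algebra F, ∃! φ : Co.V ⊗ A.a ⟶ B.a, IsMeasuring F Co A B φ

section HomAlgebra

variable [MonoidalClosed C]

-- Reducible, so that the carrier of `homAlg F Co B` is seen as `[C, B]` when rewriting.
noncomputable abbrev homAlg (F : C ⥤ C) [F.LaxMonoidal] (Co : Endofunctor.Coalgebra F)
    (B : Endofunctor.Algebra F) : Endofunctor.Algebra F where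
  a := (ihom Co.V).obj B.a
  str := MonoidalClosed.curry ((Co.str ▷ _) ≫ Functor.LaxMonoidal.μ F Co.V _ ≫
    F.map ((ihom.ev Co.V).app B.a) ≫ B.str)

variable {F : C ⥤ C} [F.LaxMonoidal]

lemma isMeasuring_uncurry_iff (Co : Endofunctor.Coalgebra F) (A B : Endofunctor.Algebra F)
    (g : A.a ⟶ (ihom Co.V).obj B.a) :
    IsMeasuring F Co A B (MonoidalClosed.uncurry g) ↔
      F.map g ≫ (homAlg F Co B).str = A.str ≫ g := by
  dsimp only [homAlg]
  rw [← MonoidalClosed.curry_natural_left, whisker_exchange_assoc,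
    Functor.LaxMonoidal.μ_natural_right_assoc, ← Functor.map_comp_assoc,
    ← MonoidalClosed.uncurry_eq, MonoidalClosed.curry_eq_iff, MonoidalClosed.uncurry_natural_left,
    IsMeasuring, eq_comm]

noncomputable def measuringEquivHom (Co : Endofunctor.Coalgebra F)
    (A B : Endofunctor.Algebra F) :
    {φ : Co.V ⊗ A.a ⟶ B.a // IsMeasuring F Co A B φ} ≃ (A ⟶ homAlg F Co B) where
  toFun φ := ⟨MonoidalClosed.curry φ.1,
    (isMeasuring_uncurry_iff Co A B _).mp (by rw [MonoidalClosed.uncurry_curry]; exact φ.2)⟩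
  invFun f := ⟨MonoidalClosed.uncurry f.f, (isMeasuring_uncurry_iff Co A B f.f).mpr f.h⟩
  left_inv φ := Subtype.ext (MonoidalClosed.uncurry_curry φ.1)
  right_inv f := Endofunctor.Algebra.Hom.ext (MonoidalClosed.curry_uncurry f.f)

lemma isCInitial_iff_forall_unique_hom (Co : Endofunctor.Coalgebra F)
    (A : Endofunctor.Algebra F) :
    IsCInitial F Co A ↔ ∀ B, Nonempty (Unique (A ⟶ homAlg F Co B)) := by
  refine forall_congr' fun B => ?_
  rw [← unique_subtype_iff_existsUnique]
  exact ⟨fun ⟨_⟩ => ⟨(measuringEquivHom Co A B).symm.unique⟩,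
    fun ⟨_⟩ => ⟨(measuringEquivHom Co A B).unique⟩⟩

variable {G : C ⥤ C} [G.LaxMonoidal] (ν : F ⟶ G) [NatTrans.IsMonoidal ν]

lemma app_comp_homAlg_str_pushforwardCoalg (Co : Endofunctor.Coalgebra F)
    (B : Endofunctor.Algebra G) :
    ν.app _ ≫ (homAlg G ((pushforwardCoalg ν).obj Co) B).str =
      (homAlg F Co ((pullbackAlg ν).obj B)).str := by
  dsimp only [homAlg]
  rw [← MonoidalClosed.curry_natural_left]
  congr 1
  dsimp only [pushforwardCoalg, pullbackAlg]
  rw [comp_whiskerRight, assoc, whisker_exchange_assoc, ← tensorHom_def'_assoc,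
    ← NatTrans.IsMonoidal.tensor_assoc, ← ν.naturality_assoc]
  rfl

lemma pullbackAlg_obj_homAlg (Co : Endofunctor.Coalgebra F) (B : Endofunctor.Algebra G) :
    (pullbackAlg ν).obj (homAlg G ((pushforwardCoalg ν).obj Co) B) =
      homAlg F Co ((pullbackAlg ν).obj B) :=
  congrArg (Endofunctor.Algebra.mk _) (app_comp_homAlg_str_pushforwardCoalg ν Co B)

end HomAlgebra

theorem stmt3_general [MonoidalClosed C]
    {F G : C ⥤ C} [F.LaxMonoidal] [G.LaxMonoidal]
    (μ : F ⟶ G) [NatTrans.IsMonoidal μ]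
    (L : Endofunctor.Algebra F ⥤ Endofunctor.Algebra G)
    (adj : L ⊣ pullbackAlg μ)
    (Co : Endofunctor.Coalgebra F) (A : Endofunctor.Algebra F)
    (hA : IsCInitial F Co A) :
    IsCInitial G ((pushforwardCoalg μ).obj Co) (L.obj A) := by
  rw [isCInitial_iff_forall_unique_hom] at hA ⊢
  intro B
  obtain ⟨_⟩ := pullbackAlg_obj_homAlg μ Co B ▸ hA ((pullbackAlg μ).obj B)
  exact ⟨(adj.homEquiv _ _).unique⟩

/-- Let `𝒞` be symmetric monoidal closed, `F`, `G` lax monoidal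
endofunctors, `μ : F ⟶ G` a monoidal natural transformation, and suppose the pullback
functor `μ^* : Alg^G ⥤ Alg^F` has a left adjoint `μ_!`.  If the `F`-algebra `A` is
`C`-initial for an `F`-coalgebra `C`, then `μ_!(A)` is `μ_*(C)`-initial. -/
theorem stmt3 [SymmetricCategory C] [MonoidalClosed C]
    {F G : C ⥤ C} [F.LaxMonoidal] [G.LaxMonoidal]
    (μ : F ⟶ G) [NatTrans.IsMonoidal μ]
    (L : Endofunctor.Algebra F ⥤ Endofunctor.Algebra G)
    (adj : L ⊣ pullbackAlg μ)
    (Co : Endofunctor.Coalgebra F) (A : Endofunctor.Algebra F)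
    (hA : IsCInitial F Co A) :
    IsCInitial G ((pushforwardCoalg μ).obj Co) (L.obj A) :=
  stmt3_general μ L adj Co A hA

end PaperStmt
end

section
/- Let (𝒞, ⊗, I) be a monoidal category, (F, ∇^F, η^F) and (G, ∇^G, η^G) lax monoidal endofunctors of 𝒞, and ν : G ⟶ F and μ : F ⟶ G monoidal natural transformations such that for all objects X, Y one has ∇^F_{X,Y} ∘ (id_{F X} ⊗ ν_Y) = ∇^F_{X,Y} ∘ (ν_X ⊗ ν_Y) ∘ (μ_X ⊗ id_{G Y}) as morphisms F X ⊗ G Y ⟶ F(X ⊗ Y). Then for every F-coalgebra (C, χ) and all F-algebras (A, α), (B, β), every measuring φ : C ⊗ A ⟶ B from A to B by C (with respect to F) is also a measuring with respect to G from the G-algebra ν^*(A) = (A, α ∘ ν_A) to the G-algebra ν^*(B) = (B, β ∘ ν_B) by the G-coalgebra μ_*(C) = (C, μ_C ∘ χ). -/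
open CategoryTheory Category MonoidalCategory Limits

universe v u

namespace PaperStmt

variable {C : Type u} [Category.{v} C] [MonoidalCategory.{v} C]

theorem whiskerLeft_app_comp_μ_eq {F G : C ⥤ C} [F.LaxMonoidal] [G.LaxMonoidal]
    (ν : G ⟶ F) (μ : F ⟶ G) [NatTrans.IsMonoidal ν] {X Y : C}
    (hcoeq : (F.obj X ◁ ν.app Y) ≫ Functor.LaxMonoidal.μ F X Y =
      (μ.app X ▷ G.obj Y) ≫ (ν.app X ⊗ₘ ν.app Y) ≫ Functor.LaxMonoidal.μ F X Y) :
    (F.obj X ◁ ν.app Y) ≫ Functor.LaxMonoidal.μ F X Y =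
      (μ.app X ▷ G.obj Y) ≫ Functor.LaxMonoidal.μ G X Y ≫ ν.app (X ⊗ Y) := by
  rw [hcoeq, NatTrans.IsMonoidal.tensor]

theorem IsMeasuring.whiskerLeft_comp_str {F : C ⥤ C} [F.LaxMonoidal]
    {Co : Endofunctor.Coalgebra F} {A B : Endofunctor.Algebra F} {φ : Co.V ⊗ A.a ⟶ B.a}
    (hφ : IsMeasuring F Co A B φ) {Z : C} (g : Z ⟶ F.obj A.a) :
    (Co.V ◁ (g ≫ A.str)) ≫ φ =
      (Co.str ▷ Z) ≫ (F.obj Co.V ◁ g) ≫ Functor.LaxMonoidal.μ F Co.V A.a ≫ F.map φ ≫ B.str := by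
  rw [MonoidalCategory.whiskerLeft_comp, assoc, hφ, whisker_exchange_assoc]

theorem stmt4_general {F G : C ⥤ C} [F.LaxMonoidal] [G.LaxMonoidal]
    (ν : G ⟶ F) (μ : F ⟶ G) [NatTrans.IsMonoidal ν]
    (hcoeq : ∀ X Y : C,
      (F.obj X ◁ ν.app Y) ≫ Functor.LaxMonoidal.μ F X Y =
        (μ.app X ▷ G.obj Y) ≫ (ν.app X ⊗ₘ ν.app Y) ≫ Functor.LaxMonoidal.μ F X Y)
    (Co : Endofunctor.Coalgebra F) (A B : Endofunctor.Algebra F)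
    (φ : Co.V ⊗ A.a ⟶ B.a) (hφ : IsMeasuring F Co A B φ) :
    IsMeasuring G ((pushforwardCoalg μ).obj Co)
      ((pullbackAlg ν).obj A) ((pullbackAlg ν).obj B) φ := by
  change (Co.V ◁ (ν.app A.a ≫ A.str)) ≫ φ = ((Co.str ≫ μ.app Co.V) ▷ G.obj A.a) ≫
    Functor.LaxMonoidal.μ G Co.V A.a ≫ G.map φ ≫ ν.app B.a ≫ B.str
  rw [hφ.whiskerLeft_comp_str, reassoc_of% whiskerLeft_app_comp_μ_eq ν μ (hcoeq Co.V A.a),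
    comp_whiskerRight, ν.naturality_assoc, assoc]

/-- Given monoidal natural transformations `ν : G ⟶ F`, `μ : F ⟶ G` such
that `∇^F_{X,Y} ∘ (id ⊗ ν_Y) = ∇^F_{X,Y} ∘ (ν_X ⊗ ν_Y) ∘ (μ_X ⊗ id)`, every `F`-measuring
`φ : C ⊗ A ⟶ B` is also a `G`-measuring from `ν^*(A)` to `ν^*(B)` by `μ_*(C)`. -/
theorem stmt4 {F G : C ⥤ C} [F.LaxMonoidal] [G.LaxMonoidal]
    (ν : G ⟶ F) (μ : F ⟶ G) [NatTrans.IsMonoidal ν] [NatTrans.IsMonoidal μ]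
    (hcoeq : ∀ X Y : C,
      (F.obj X ◁ ν.app Y) ≫ Functor.LaxMonoidal.μ F X Y =
        (μ.app X ▷ G.obj Y) ≫ (ν.app X ⊗ₘ ν.app Y) ≫ Functor.LaxMonoidal.μ F X Y)
    (Co : Endofunctor.Coalgebra F) (A B : Endofunctor.Algebra F)
    (φ : Co.V ⊗ A.a ⟶ B.a) (hφ : IsMeasuring F Co A B φ) :
    IsMeasuring G ((pushforwardCoalg μ).obj Co)
      ((pullbackAlg ν).obj A) ((pullbackAlg ν).obj B) φ :=
  stmt4_general ν μ hcoeq Co A B φ hφ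

end PaperStmt
end

section
/- Let (𝒞, ⊗, I) be a monoidal category, (F, ∇^F, η^F) and (G, ∇^G, η^G) lax monoidal endofunctors of 𝒞, and ν : G ⟶ F and μ : F ⟶ G monoidal natural transformations with ν ∘ μ = id_F. Then for every F-coalgebra (C, χ) and all F-algebras (A, α), (B, β), every measuring φ : C ⊗ A ⟶ B from A to B by C (with respect to F) is also a measuring with respect to G from the G-algebra ν^*(A) = (A, α ∘ ν_A) to the G-algebra ν^*(B) = (B, β ∘ ν_B) by the G-coalgebra μ_*(C) = (C, μ_C ∘ χ). -/
/-! By naturality of `ν` and `ν_{X ⊗ Y} ∘ ∇^G = ∇^F ∘ (ν_X ⊗ ν_Y)`, an `F`-measuring by the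
pushforward `ν_*(D)` of a `G`-coalgebra `D` is a `G`-measuring by `D` between the pullbacks along
`ν`. Since `ν ∘ μ = id`, `ν_*(μ_*(C)) = C`. -/

open CategoryTheory Category MonoidalCategory Limits

universe v u

namespace PaperStmt

variable {C : Type u} [Category.{v} C] [MonoidalCategory.{v} C]

theorem IsMeasuring.pullback {F G : C ⥤ C} [F.LaxMonoidal] [G.LaxMonoidal]
    (ν : G ⟶ F) [NatTrans.IsMonoidal ν] {D : Endofunctor.Coalgebra G}
    {A B : Endofunctor.Algebra F} {φ : D.V ⊗ A.a ⟶ B.a}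
    (hφ : IsMeasuring F ((pushforwardCoalg ν).obj D) A B φ) :
    IsMeasuring G D ((pullbackAlg ν).obj A) ((pullbackAlg ν).obj B) φ := by
  calc (D.V ◁ (ν.app A.a ≫ A.str)) ≫ φ
      = (D.V ◁ ν.app A.a) ≫ ((D.str ≫ ν.app D.V) ▷ F.obj A.a) ≫
          Functor.LaxMonoidal.μ F D.V A.a ≫ F.map φ ≫ B.str := by
        rw [whiskerLeft_comp, assoc]
        exact congrArg _ hφ
    _ = (D.str ▷ G.obj A.a) ≫ Functor.LaxMonoidal.μ G D.V A.a ≫ G.map φ ≫ ν.app B.a ≫ B.str := by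
        rw [whisker_exchange_assoc, comp_whiskerRight, assoc, ν.naturality_assoc,
          NatTrans.IsMonoidal.tensor_assoc, MonoidalCategory.tensorHom_def, assoc]

theorem stmt5_general {F G : C ⥤ C} [F.LaxMonoidal] [G.LaxMonoidal]
    (ν : G ⟶ F) (μ : F ⟶ G) [NatTrans.IsMonoidal ν]
    (hretr : μ ≫ ν = 𝟙 F)
    (Co : Endofunctor.Coalgebra F) (A B : Endofunctor.Algebra F)
    (φ : Co.V ⊗ A.a ⟶ B.a) (hφ : IsMeasuring F Co A B φ) :
    IsMeasuring G ((pushforwardCoalg μ).obj Co)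
      ((pullbackAlg ν).obj A) ((pullbackAlg ν).obj B) φ := by
  have hstr : (Co.str ≫ μ.app Co.V) ≫ ν.app Co.V = Co.str := by
    rw [assoc, ← NatTrans.comp_app, hretr, NatTrans.id_app, comp_id]
  apply IsMeasuring.pullback ν
  -- only the structure map is rewritten: rewriting the coalgebra would change the type of `φ`
  change IsMeasuring F ⟨Co.V, (Co.str ≫ μ.app Co.V) ≫ ν.app Co.V⟩ A B φ
  rwa [hstr]

/-- Given monoidal natural transformations `ν : G ⟶ F`, `μ : F ⟶ G` with
`ν ∘ μ = id_F`, every `F`-measuring `φ : C ⊗ A ⟶ B` is also a `G`-measuring from `ν^*(A)`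
to `ν^*(B)` by `μ_*(C)`. -/
theorem stmt5 {F G : C ⥤ C} [F.LaxMonoidal] [G.LaxMonoidal]
    (ν : G ⟶ F) (μ : F ⟶ G) [NatTrans.IsMonoidal ν] [NatTrans.IsMonoidal μ]
    (hretr : μ ≫ ν = 𝟙 F)
    (Co : Endofunctor.Coalgebra F) (A B : Endofunctor.Algebra F)
    (φ : Co.V ⊗ A.a ⟶ B.a) (hφ : IsMeasuring F Co A B φ) :
    IsMeasuring G ((pushforwardCoalg μ).obj Co)
      ((pullbackAlg ν).obj A) ((pullbackAlg ν).obj B) φ :=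
  stmt5_general ν μ hretr Co A B φ hφ

end PaperStmt
end

section
/- Let (𝒞, ⊗, I) be a monoidal category, F and G lax monoidal endofunctors, and μ : F ⟶ G a monoidal natural transformation. Suppose the pushforward functor μ_* : CoAlg^F ⥤ CoAlg^G has a right adjoint R, with counit ε : μ_* ∘ R ⟶ id. Then for every G-coalgebra (C, χ), all G-algebras (A, α), (B, β), and every measuring f : C ⊗ A ⟶ B from A to B by C with respect to G, the composite f ∘ (ε_C ⊗ id_A) : R(C) ⊗ A ⟶ B (where ε_C denotes the underlying 𝒞-morphism of the counit component at C, whose domain is the underlying object of R(C)) is a measuring with respect to F from the F-algebra μ^*(A) = (A, α ∘ μ_A) to the F-algebra μ^*(B) = (B, β ∘ μ_B) by the F-coalgebra R(C). -/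
open CategoryTheory Category MonoidalCategory Limits

universe v u

namespace PaperStmt

variable {C : Type u} [Category.{v} C] [MonoidalCategory.{v} C]

/-!
The counit component `ε_C : μ_* (R C) ⟶ C` is a morphism of `G`-coalgebras. Measurings can be
precomposed with coalgebra morphisms (naturality of `∇`), so `f ∘ (ε_C ⊗ id)` is a `G`-measuring
by `μ_* (R C)`; and since `μ` is monoidal, every `G`-measuring by `μ_* D` is also an
`F`-measuring by `D` between the pulled-back algebras.
-/

theorem IsMeasuring.whiskerRight_comp {F : C ⥤ C} [F.LaxMonoidal]
    {D Co : Endofunctor.Coalgebra F} (g : D ⟶ Co) {A B : Endofunctor.Algebra F}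
    {φ : Co.V ⊗ A.a ⟶ B.a} (hφ : IsMeasuring F Co A B φ) :
    IsMeasuring F D A B ((g.f ▷ A.a) ≫ φ) := by
  unfold IsMeasuring at hφ ⊢
  rw [whisker_exchange_assoc, hφ, ← comp_whiskerRight_assoc, ← g.h, comp_whiskerRight_assoc,
    Functor.LaxMonoidal.μ_natural_left_assoc, Functor.map_comp_assoc]

theorem IsMeasuring.of_pushforward {F G : C ⥤ C} [F.LaxMonoidal] [G.LaxMonoidal]
    {μ : F ⟶ G} [NatTrans.IsMonoidal μ] {D : Endofunctor.Coalgebra F}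
    {A B : Endofunctor.Algebra G} {φ : D.V ⊗ A.a ⟶ B.a}
    (hφ : IsMeasuring G ((pushforwardCoalg μ).obj D) A B φ) :
    IsMeasuring F D ((pullbackAlg μ).obj A) ((pullbackAlg μ).obj B) φ := by
  replace hφ : (D.V ◁ A.str) ≫ φ = ((D.str ≫ μ.app D.V) ▷ G.obj A.a) ≫
      Functor.LaxMonoidal.μ G D.V A.a ≫ G.map φ ≫ B.str := hφ
  change (D.V ◁ (μ.app A.a ≫ A.str)) ≫ φ = (D.str ▷ F.obj A.a) ≫
      Functor.LaxMonoidal.μ F D.V A.a ≫ F.map φ ≫ μ.app B.a ≫ B.str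
  rw [whiskerLeft_comp_assoc, hφ, comp_whiskerRight_assoc, whisker_exchange_assoc,
    ← tensorHom_def'_assoc, ← NatTrans.IsMonoidal.tensor_assoc, μ.naturality_assoc]

/-- Suppose the pushforward functor `μ_* : CoAlg^F ⥤ CoAlg^G` has a right
adjoint `R` with counit `ε`.  Then for every `G`-measuring `f : C ⊗ A ⟶ B`, the composite
`f ∘ (ε_C ⊗ id_A) : R(C) ⊗ A ⟶ B` is an `F`-measuring from `μ^*(A)` to `μ^*(B)` by `R(C)`. -/
theorem stmt8 {F G : C ⥤ C} [F.LaxMonoidal] [G.LaxMonoidal]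
    (μ : F ⟶ G) [NatTrans.IsMonoidal μ]
    (R : Endofunctor.Coalgebra G ⥤ Endofunctor.Coalgebra F)
    (adj : pushforwardCoalg μ ⊣ R)
    (Co : Endofunctor.Coalgebra G) (A B : Endofunctor.Algebra G)
    (f : Co.V ⊗ A.a ⟶ B.a) (hf : IsMeasuring G Co A B f) :
    IsMeasuring F (R.obj Co) ((pullbackAlg μ).obj A) ((pullbackAlg μ).obj B)
      (((adj.counit.app Co).f ▷ A.a) ≫ f) :=
  (hf.whiskerRight_comp (adj.counit.app Co)).of_pushforward

end PaperStmt
end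

section
/- Let (𝒞, ⊗, I) be a symmetric monoidal closed category and F a lax monoidal endofunctor of 𝒞. For all F-coalgebras (C, χ), (D, δ) and every F-algebra (B, β), the canonical isomorphism [C, [D, B]] ≅ [D ⊗ C, B] coming from the closed monoidal structure of 𝒞 is an isomorphism of F-algebras between the convolution algebra [C, [D, B]] (where [D, B] carries its convolution algebra structure) and the convolution algebra [D ⊗ C, B] (where D ⊗ C carries the tensor coalgebra structure). -/
open CategoryTheory Category MonoidalCategory Limits

universe v u

namespace PaperStmt

variable {C : Type u} [Category.{v} C] [MonoidalCategory.{v} C]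

variable [SymmetricCategory C] [MonoidalClosed C]

/-- The lax closed structure map `F̂ : F [X,Y] ⟶ [F X, F Y]` of a lax monoidal functor:
the adjunct of `F(ev_{X,Y}) ∘ ∇_{X,[X,Y]}`. -/
noncomputable def laxClosedMap (F : C ⥤ C) [F.LaxMonoidal] (X Y : C) :
    F.obj ((ihom X).obj Y) ⟶ (ihom (F.obj X)).obj (F.obj Y) :=
  MonoidalClosed.curry
    (Functor.LaxMonoidal.μ F X ((ihom X).obj Y) ≫ F.map ((ihom.ev X).app Y))

/-- The structure map of the convolution algebra `[C, B]`: the composite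
`F [C,B] ⟶ [F C, F B] ⟶ [C, F B] ⟶ [C, B]` given by `F̂`, precomposition with `χ` and
postcomposition with `β`. -/
noncomputable def convStr (F : C ⥤ C) [F.LaxMonoidal]
    (Co : Endofunctor.Coalgebra F) (B : Endofunctor.Algebra F) :
    F.obj ((ihom Co.V).obj B.a) ⟶ (ihom Co.V).obj B.a :=
  laxClosedMap F Co.V B.a ≫ (MonoidalClosed.pre Co.str).app (F.obj B.a) ≫
    (ihom Co.V).map B.str

/-- The convolution algebra `[C, B]` of an `F`-coalgebra `C` and an `F`-algebra `B`. -/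
noncomputable def convAlg (F : C ⥤ C) [F.LaxMonoidal]
    (Co : Endofunctor.Coalgebra F) (B : Endofunctor.Algebra F) :
    Endofunctor.Algebra F :=
  ⟨(ihom Co.V).obj B.a, convStr F Co B⟩

/-- The canonical morphism `[C, [D, B]] ⟶ [D ⊗ C, B]` coming from the closed monoidal
structure of `𝒞`. -/
noncomputable def canonMap (D Co B : C) :
    (ihom Co).obj ((ihom D).obj B) ⟶ (ihom (D ⊗ Co)).obj B :=
  MonoidalClosed.curry ((α_ D Co ((ihom Co).obj ((ihom D).obj B))).hom ≫
    (D ◁ (ihom.ev Co).app ((ihom D).obj B)) ≫ (ihom.ev D).app B)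

/-!
Everything is checked after uncurrying. The convolution structure of `[C, B]` uncurries to
`β ∘ F(ev_C) ∘ ∇_{C,[C,B]} ∘ (χ ⊗ id)` and the canonical map to `ev_D ∘ (D ◁ ev_C) ∘ α`, so
both sides of the algebra-morphism square uncurry to composites of `δ`, `χ`, two tensorators,
the two evaluations and `β`; these agree by associativity of the tensorator and the interchange
law. The inverse of the canonical map is the double currying of `ev_{D ⊗ C} ∘ α⁻¹`.
-/

open MonoidalClosed Functor.LaxMonoidal

section

variable {𝒞 : Type*} [Category 𝒞] [MonoidalCategory 𝒞]

lemma tensorHom_whiskerRight_comp_associator_comp_whiskerLeft {D C X Y Z W : 𝒞}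
    (f : D ⟶ Y) (g : C ⟶ Z) (h : Z ⊗ X ⟶ W) :
    (f ⊗ₘ g) ▷ X ≫ (α_ Y Z X).hom ≫ Y ◁ h =
      (α_ D C X).hom ≫ D ◁ (g ▷ X) ≫ D ◁ h ≫ f ▷ W := by
  rw [tensorHom_def', comp_whiskerRight_assoc, associator_naturality_left_assoc,
    associator_naturality_middle_assoc, ← whisker_exchange]

variable [MonoidalClosed 𝒞]

section Currying

variable (D C B : 𝒞)

lemma uncurry_canonMap :
    uncurry (canonMap D C B) =
      (α_ D C _).hom ≫ D ◁ (ihom.ev C).app ((ihom D).obj B) ≫ (ihom.ev D).app B :=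
  uncurry_curry _

lemma uncurry_comp_canonMap {Y : 𝒞} (g : Y ⟶ (ihom C).obj ((ihom D).obj B)) :
    uncurry (g ≫ canonMap D C B) = (α_ D C Y).hom ≫ D ◁ uncurry g ≫ (ihom.ev D).app B := by
  rw [uncurry_natural_left, uncurry_canonMap, associator_naturality_right_assoc,
    ← whiskerLeft_comp_assoc, ← uncurry_eq g]

noncomputable def canonInvMap : (ihom (D ⊗ C)).obj B ⟶ (ihom C).obj ((ihom D).obj B) :=
  curry (curry ((α_ D C _).inv ≫ (ihom.ev (D ⊗ C)).app B))

lemma canonMap_comp_canonInvMap : canonMap D C B ≫ canonInvMap D C B = 𝟙 _ := by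
  apply uncurry_injective
  apply uncurry_injective
  rw [canonInvMap, ← curry_natural_left, ← curry_natural_left, uncurry_curry, uncurry_curry,
    associator_inv_naturality_right_assoc, ← uncurry_eq, uncurry_canonMap, Iso.inv_hom_id_assoc,
    uncurry_id_eq_ev, uncurry_eq]

lemma canonInvMap_comp_canonMap : canonInvMap D C B ≫ canonMap D C B = 𝟙 _ := by
  apply uncurry_injective
  rw [uncurry_comp_canonMap, canonInvMap, uncurry_curry, ← uncurry_eq, uncurry_curry,
    Iso.hom_inv_id_assoc, uncurry_id_eq_ev]

instance isIso_canonMap : IsIso (canonMap D C B) :=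
  ⟨canonInvMap D C B, canonMap_comp_canonInvMap D C B, canonInvMap_comp_canonMap D C B⟩

end Currying

section Convolution

variable (F : 𝒞 ⥤ 𝒞) [F.LaxMonoidal] (C : Endofunctor.Coalgebra F) (B : Endofunctor.Algebra F)

lemma convStr_eq_curry :
    convStr F C B =
      curry (C.str ▷ _ ≫ μ F C.V _ ≫ F.map ((ihom.ev C.V).app B.a) ≫ B.str) := by
  rw [convStr, laxClosedMap, curry_pre_app_assoc, ← curry_natural_right, Category.assoc,
    Category.assoc]

lemma uncurry_map_comp_convStr {Y : 𝒞} (f : Y ⟶ (ihom C.V).obj B.a) :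
    uncurry (F.map f ≫ convStr F C B) =
      C.str ▷ F.obj Y ≫ μ F C.V Y ≫ F.map (uncurry f) ≫ B.str := by
  rw [convStr_eq_curry, ← curry_natural_left, uncurry_curry, whisker_exchange_assoc,
    μ_natural_right_assoc, ← F.map_comp_assoc, ← uncurry_eq]

lemma uncurry_convStr :
    uncurry (convStr F C B) =
      C.str ▷ _ ≫ μ F C.V _ ≫ F.map ((ihom.ev C.V).app B.a) ≫ B.str := by
  rw [convStr_eq_curry, uncurry_curry]

end Convolution

end

/-- For `F`-coalgebras `C`, `D` and an `F`-algebra `B`, the canonical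
isomorphism `[C, [D, B]] ≅ [D ⊗ C, B]` from the closed monoidal structure is an
isomorphism of `F`-algebras between the convolution algebra `[C, [D, B]]` and the
convolution algebra `[D ⊗ C, B]` (with `D ⊗ C` the tensor coalgebra). -/
theorem stmt10 (F : C ⥤ C) [F.LaxMonoidal]
    (Co D : Endofunctor.Coalgebra F) (B : Endofunctor.Algebra F) :
    IsIso (canonMap D.V Co.V B.a) ∧
      F.map (canonMap D.V Co.V B.a) ≫ convStr F (tensorCoalg F D Co) B =
        convStr F Co (convAlg F D B) ≫ canonMap D.V Co.V B.a := by
  refine ⟨inferInstance, ?_⟩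
  unfold tensorCoalg convAlg
  apply uncurry_injective
  rw [uncurry_map_comp_convStr F ⟨_, _⟩ B, uncurry_comp_canonMap, uncurry_convStr]
  dsimp only
  rw [whiskerLeft_comp, whiskerLeft_comp, Category.assoc, Category.assoc,
    ← uncurry_eq (F.map _ ≫ convStr F D B), uncurry_map_comp_convStr, uncurry_canonMap,
    comp_whiskerRight_assoc, F.map_comp_assoc, associativity_assoc,
    reassoc_of% tensorHom_whiskerRight_comp_associator_comp_whiskerLeft, ← uncurry_eq]

end PaperStmt
end

section
/- Let (𝒞, ⊗, I) be a monoidal category and (F, ∇, η) a lax monoidal endofunctor of 𝒞. Given F-algebras A, A', A'', F-coalgebras (C, χ), (D, δ), a measuring φ : C ⊗ A ⟶ A' from A to A' by C, and a measuring ψ : D ⊗ A' ⟶ A'' from A' to A'' by D, the composite ψ ∘ (id_D ⊗ φ) ∘ assoc : (D ⊗ C) ⊗ A ⟶ A'' (assoc the associator) is a measuring from A to A'' by the tensor coalgebra D ⊗ C. -/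
/-!
Write `χ ⋆ φ = measuringLift F χ φ` for `F φ ∘ ∇ ∘ (χ ⊗ id)`, so that `φ` measures iff `φ ∘ (id ⊗ α) = β ∘ (χ ⋆ φ)`.
Applying the two measuring conditions in turn rewrites `ψ ∘ (id ⊗ φ) ∘ assoc ∘ (id ⊗ α)` as
`α'' ∘ (δ ⋆ ψ) ∘ (id ⊗ (χ ⋆ φ)) ∘ assoc`, and associativity of `∇`, its naturality and the
interchange law identify `(δ ⋆ ψ) ∘ (id ⊗ (χ ⋆ φ)) ∘ assoc` with `(∇ ∘ (δ ⊗ χ)) ⋆ (ψ ∘ (id ⊗ φ) ∘ assoc)`.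
-/

open CategoryTheory Category MonoidalCategory Limits

universe v u

namespace PaperStmt

variable {C : Type u} [Category.{v} C] [MonoidalCategory.{v} C]

def measuringLift (F : C ⥤ C) [F.LaxMonoidal] {V W X Y : C} (c : V ⟶ F.obj W)
    (φ : W ⊗ X ⟶ Y) : V ⊗ F.obj X ⟶ F.obj Y :=
  (c ▷ F.obj X) ≫ Functor.LaxMonoidal.μ F W X ≫ F.map φ

lemma isMeasuring_iff (F : C ⥤ C) [F.LaxMonoidal] (Co : Endofunctor.Coalgebra F)
    (A B : Endofunctor.Algebra F) (φ : Co.V ⊗ A.a ⟶ B.a) :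
    IsMeasuring F Co A B φ ↔ (Co.V ◁ A.str) ≫ φ = measuringLift F Co.str φ ≫ B.str := by
  simp only [IsMeasuring, measuringLift, assoc]

lemma μ_whiskerRight_μ_map_associator_whiskerLeft (F : C ⥤ C) [F.LaxMonoidal] {W W' X Y : C}
    (φ : W ⊗ X ⟶ Y) :
    (Functor.LaxMonoidal.μ F W' W ▷ F.obj X) ≫ Functor.LaxMonoidal.μ F (W' ⊗ W) X ≫
        F.map ((α_ W' W X).hom ≫ (W' ◁ φ)) =
      (α_ (F.obj W') (F.obj W) (F.obj X)).hom ≫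
        (F.obj W' ◁ (Functor.LaxMonoidal.μ F W X ≫ F.map φ)) ≫ Functor.LaxMonoidal.μ F W' Y := by
  rw [Functor.map_comp, Functor.LaxMonoidal.associativity_assoc,
    ← Functor.LaxMonoidal.μ_natural_right, MonoidalCategory.whiskerLeft_comp_assoc]

lemma measuringLift_tensor (F : C ⥤ C) [F.LaxMonoidal] {V V' W W' X Y Z : C}
    (c : V ⟶ F.obj W) (d : V' ⟶ F.obj W') (φ : W ⊗ X ⟶ Y) (ψ : W' ⊗ Y ⟶ Z) :
    measuringLift F ((d ⊗ₘ c) ≫ Functor.LaxMonoidal.μ F W' W)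
        ((α_ W' W X).hom ≫ (W' ◁ φ) ≫ ψ) =
      (α_ V' V (F.obj X)).hom ≫ (V' ◁ measuringLift F c φ) ≫ measuringLift F d ψ := by
  have hμ := μ_whiskerRight_μ_map_associator_whiskerLeft F (W' := W') φ
  simp only [measuringLift, MonoidalCategory.tensorHom_def, comp_whiskerRight, assoc,
    Functor.map_comp] at hμ ⊢
  rw [reassoc_of% hμ, associator_naturality_middle_assoc, associator_naturality_left_assoc]
  simp only [MonoidalCategory.whiskerLeft_comp, assoc, whisker_exchange_assoc]

/-- Given a measuring `φ : C ⊗ A ⟶ A'` and a measuring `ψ : D ⊗ A' ⟶ A''`,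
the composite `ψ ∘ (id_D ⊗ φ) ∘ assoc : (D ⊗ C) ⊗ A ⟶ A''` is a measuring from `A` to `A''`
by the tensor coalgebra `D ⊗ C`. -/
theorem stmt11 (F : C ⥤ C) [F.LaxMonoidal]
    (A A' A'' : Endofunctor.Algebra F) (Co D : Endofunctor.Coalgebra F)
    (φ : Co.V ⊗ A.a ⟶ A'.a) (hφ : IsMeasuring F Co A A' φ)
    (ψ : D.V ⊗ A'.a ⟶ A''.a) (hψ : IsMeasuring F D A' A'' ψ) :
    IsMeasuring F (tensorCoalg F D Co) A A''
      ((α_ D.V Co.V A.a).hom ≫ (D.V ◁ φ) ≫ ψ) := by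
  rw [isMeasuring_iff] at hφ hψ ⊢
  dsimp only [tensorCoalg]
  calc ((D.V ⊗ Co.V) ◁ A.str) ≫ (α_ D.V Co.V A.a).hom ≫ (D.V ◁ φ) ≫ ψ
      = (α_ D.V Co.V (F.obj A.a)).hom ≫ (D.V ◁ ((Co.V ◁ A.str) ≫ φ)) ≫ ψ := by
        rw [associator_naturality_right_assoc, MonoidalCategory.whiskerLeft_comp_assoc]
    _ = (α_ D.V Co.V (F.obj A.a)).hom ≫ (D.V ◁ measuringLift F Co.str φ) ≫
          (D.V ◁ A'.str) ≫ ψ := by rw [hφ, MonoidalCategory.whiskerLeft_comp_assoc]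
    _ = (α_ D.V Co.V (F.obj A.a)).hom ≫ (D.V ◁ measuringLift F Co.str φ) ≫
          measuringLift F D.str ψ ≫ A''.str := by rw [hψ]
    _ = measuringLift F ((D.str ⊗ₘ Co.str) ≫ Functor.LaxMonoidal.μ F D.V Co.V)
          ((α_ D.V Co.V A.a).hom ≫ (D.V ◁ φ) ≫ ψ) ≫ A''.str := by
        rw [measuringLift_tensor, assoc, assoc]

end PaperStmt
end

section
/- Let (𝒞, ⊗, I) be a monoidal category and (F, ∇, η) a lax monoidal endofunctor of 𝒞. For all F-algebras (A, α) and (B, β), the assignment f ↦ f ∘ λ_A (where λ_A : I ⊗ A ⟶ A is the left unitor) is a bijection between F-algebra morphisms from A to B and measurings from A to B by the unit coalgebra (I, η). -/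
open CategoryTheory Category MonoidalCategory Limits

universe v u

namespace PaperStmt

variable {C : Type u} [Category.{v} C] [MonoidalCategory.{v} C]

/- Naturality of `λ` and lax left unitality `λ_{F A} = F(λ_A) ∘ ∇_{I,A} ∘ (η ⊗ id)` rewrite both
sides of the measuring equation as `λ_{F A}` followed by the two sides of the algebra-morphism
square; `λ_{F A}` is an isomorphism, so it cancels. -/
theorem isMeasuring_unitCoalg_leftUnitor_comp_iff (F : C ⥤ C) [F.LaxMonoidal]
    (A B : Endofunctor.Algebra F) (f : A.a ⟶ B.a) :
    IsMeasuring F (unitCoalg F) A B ((λ_ A.a).hom ≫ f) ↔ F.map f ≫ B.str = A.str ≫ f := by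
  have hlhs : (𝟙_ C ◁ A.str) ≫ (λ_ A.a).hom ≫ f = (λ_ (F.obj A.a)).hom ≫ A.str ≫ f :=
    leftUnitor_naturality_assoc _ _
  have hrhs : (Functor.LaxMonoidal.ε F ▷ F.obj A.a) ≫ Functor.LaxMonoidal.μ F (𝟙_ C) A.a ≫
      F.map ((λ_ A.a).hom ≫ f) ≫ B.str = (λ_ (F.obj A.a)).hom ≫ F.map f ≫ B.str := by
    rw [Functor.LaxMonoidal.left_unitality, F.map_comp]
    simp only [assoc]
  dsimp only [IsMeasuring, unitCoalg]
  rw [hlhs, hrhs, cancel_epi, eq_comm]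

def algebraHomEquiv {F : C ⥤ C} (A B : Endofunctor.Algebra F) :
    (A ⟶ B) ≃ { f : A.a ⟶ B.a // F.map f ≫ B.str = A.str ≫ f } where
  toFun g := ⟨g.f, g.h⟩
  invFun f := ⟨f.val, f.property⟩
  left_inv _ := rfl
  right_inv _ := rfl

/-- The assignment `f ↦ f ∘ λ_A` is a bijection between `F`-algebra
morphisms `A ⟶ B` and measurings from `A` to `B` by the unit coalgebra `(I, η)`. -/
theorem stmt12 (F : C ⥤ C) [F.LaxMonoidal] (A B : Endofunctor.Algebra F) :
    ∃ e : (A ⟶ B) ≃ { φ : (unitCoalg F).V ⊗ A.a ⟶ B.a // IsMeasuring F (unitCoalg F) A B φ },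
      ∀ f : A ⟶ B, (e f).val = (λ_ A.a).hom ≫ f.f :=
  ⟨(algebraHomEquiv A B).trans <| Equiv.subtypeEquiv (λ_ A.a).symm.homFromEquiv fun f =>
      (isMeasuring_unitCoalg_leftUnitor_comp_iff F A B f).symm,
    fun _ => rfl⟩

end PaperStmt
end
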